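/- Let n ≥ 1 and for each k = 1,…,n let A^k ∈ ℝ^{m_k×M} have nonnegative entries with every column summing to 1 (Σ_{i=1}^{m_k} A^k_{ij} = 1 for all j). For p ∈ ℝ^M with nonnegative entries, define the lifted tensor p̃ ∈ ℝ^{m_1×⋯×m_n×M} by p̃_{i_1…i_n j} := A^1_{i_1 j}⋯A^n_{i_n j}·p_j. Then for all p, r ∈ ℝ^M with nonnegative entries, KL(p̃, r̃) = KL(p, r) (as an identity in [0, ∞]). -/
import Mathlib
set_option maxHeartbeats 1000000


/-- One term of the Kullback--Leibler divergence, with values in `[0, ∞]`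
(as an `EReal`): `0·log 0 = 0·log(0/0) = 0` and `t·log(t/0) = +∞` for
`t > 0`. -/
noncomputable def klTerm (a b : ℝ) : EReal :=
  if a = 0 then (b : EReal)
  else if b = 0 then ⊤
  else ((a * Real.log (a / b) - a + b : ℝ) : EReal)

/-- Kullback--Leibler divergence of two nonnegative families over a common
finite index set, with values in `[0, ∞]`. -/
noncomputable def KL {ι : Type*} [Fintype ι] (p q : ι → ℝ) : EReal :=
  ∑ α, klTerm (p α) (q α)

lemma coe_sum_ereal {ι : Type*} [Fintype ι] (f : ι → ℝ) :
    ((∑ i, f i : ℝ) : EReal) = ∑ i, (f i : EReal) :=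
  map_sum (⟨⟨(Real.toEReal), EReal.coe_zero⟩, EReal.coe_add⟩ : ℝ →+ EReal) f Finset.univ

lemma klTerm_nonneg (a b : ℝ) (ha : 0 ≤ a) (hb : 0 ≤ b) : 0 ≤ klTerm a b := by
  unfold klTerm
  split_ifs with h1 h2
  · exact_mod_cast hb
  · exact le_top
  · have ha' : 0 < a := lt_of_le_of_ne ha (Ne.symm h1)
    have hb' : 0 < b := lt_of_le_of_ne hb (Ne.symm h2)
    have key : a - a * Real.log (a / b) ≤ b := by
      have h := Real.add_one_le_exp (Real.log (b / a))
      have hba : Real.exp (Real.log (b / a)) = b / a := Real.exp_log (by positivity)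
      rw [hba] at h
      have hlog : Real.log (b / a) = - Real.log (a / b) := by
        rw [← Real.log_inv, inv_div]
      have h2 := mul_le_mul_of_nonneg_left h ha'.le
      have hba2 : a * (b / a) = b := by field_simp
      rw [hlog] at h2
      nlinarith
    have : (0 : ℝ) ≤ a * Real.log (a / b) - a + b := by linarith
    exact_mod_cast this

lemma sum_klTerm_scaled {ι : Type*} [Fintype ι] (c : ι → ℝ)
    (hc : ∀ i, 0 ≤ c i) (hsum : ∑ i, c i = 1) (a b : ℝ) (ha : 0 ≤ a) (hb : 0 ≤ b) :
    ∑ i, klTerm (c i * a) (c i * b) = klTerm a b := by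
  rcases eq_or_lt_of_le ha with ha0 | ha'
  · -- a = 0
    have : ∀ i, klTerm (c i * a) (c i * b) = ((c i * b : ℝ) : EReal) := by
      intro i; rw [← ha0, mul_zero]; simp [klTerm]
    simp only [this]
    rw [← coe_sum_ereal, ← Finset.sum_mul, hsum, one_mul]
    simp [klTerm, ← ha0]
  rcases eq_or_lt_of_le hb with hb0 | hb'
  · -- a > 0, b = 0
    have hRHS : klTerm a b = ⊤ := by simp [klTerm, ha'.ne', ← hb0]
    rw [hRHS]
    obtain ⟨i0, hi0⟩ : ∃ i, c i ≠ 0 := by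
      by_contra h
      push_neg at h
      simp [h] at hsum
    have hi0' : 0 < c i0 := lt_of_le_of_ne (hc i0) (Ne.symm hi0)
    have hterm : klTerm (c i0 * a) (c i0 * b) = ⊤ := by
      have : c i0 * a ≠ 0 := ne_of_gt (mul_pos hi0' ha')
      simp [klTerm, this, ← hb0]
    have hle := Finset.single_le_sum
      (f := fun i => klTerm (c i * a) (c i * b))
      (fun i _ => klTerm_nonneg _ _ (mul_nonneg (hc i) ha) (mul_nonneg (hc i) hb))
      (Finset.mem_univ i0)
    exact top_le_iff.mp (by simpa [hterm] using hle)
  · -- a > 0, b > 0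
    set g : ℝ := a * Real.log (a / b) - a + b with hg
    have hterm : ∀ i, klTerm (c i * a) (c i * b) = ((c i * g : ℝ) : EReal) := by
      intro i
      rcases eq_or_lt_of_le (hc i) with h0 | h0
      · rw [← h0]; simp [klTerm]
      · have h1 : c i * a ≠ 0 := by positivity
        have h2 : c i * b ≠ 0 := by positivity
        have hlog : (c i * a) / (c i * b) = a / b :=
          mul_div_mul_left a b h0.ne'
        simp only [klTerm, h1, h2, if_false, hlog]
        norm_cast
        rw [hg]; ring
    simp only [hterm]
    rw [← coe_sum_ereal, ← Finset.sum_mul, hsum, one_mul]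
    simp [klTerm, ha'.ne', hb'.ne', hg]

/-- Lifting invariance of the KL divergence: if each `Aᵏ` is nonnegative and
column-stochastic, then the lifted tensors
`p̃_{i₁…iₙj} = A¹_{i₁j}⋯Aⁿ_{iₙj}·pⱼ` satisfy `KL(p̃, r̃) = KL(p, r)` as an
identity in `[0, ∞]`. -/
theorem stmt8 {n M : ℕ} (hn : 1 ≤ n) (m : Fin n → ℕ)
    (A : (k : Fin n) → Fin (m k) → Fin M → ℝ)
    (hA0 : ∀ k i j, 0 ≤ A k i j)
    (hAcol : ∀ k j, ∑ i, A k i j = 1)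
    (p r : Fin M → ℝ) (hp : ∀ j, 0 ≤ p j) (hr : ∀ j, 0 ≤ r j) :
    KL (fun α : ((k : Fin n) → Fin (m k)) × Fin M =>
          (∏ k, A k (α.1 k) α.2) * p α.2)
        (fun α : ((k : Fin n) → Fin (m k)) × Fin M =>
          (∏ k, A k (α.1 k) α.2) * r α.2)
      = KL p r := by
  unfold KL
  rw [Fintype.sum_prod_type_right]
  apply Finset.sum_congr rfl
  intro j _
  exact sum_klTerm_scaled (ι := (k : Fin n) → Fin (m k)) (fun i => ∏ k, A k (i k) j)
    (fun i => Finset.prod_nonneg fun k _ => hA0 k (i k) j)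
    (by rw [show (∑ i : (k : Fin n) → Fin (m k), ∏ k, A k (i k) j)
              = ∏ k, ∑ i, A k i j from by rw [Finset.prod_univ_sum]; rfl]
        simp [hAcol])
    (p j) (r j) (hp j) (hr j)
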